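/- arXiv:2209.00855 — 4 statements merged into one kernel-verified Lean document; each statement's English description precedes it below -/
import Mathlib

section
/- Let N be a natural number and let l_1, ..., l_N, l'_1, ..., l'_N be integers such that (1) l_i > 0 and l'_i ≥ 0 for all i; (2) ∑_{i=1}^N l_i ≥ ∑_{i=1}^N l'_i; and (3) ∑_{i=1}^N l_i Q_i = ∑_{i=1}^N l'_i Q_i, where Q_1 = 1 and Q_i = ∏_{j=1}^{i-1} (l_j + 1) for i ≥ 2. Then l_i = l'_i for all i. -/
/-!
Read `l'` as a digit string in the mixed radix system with radices `l i + 1`; there `l` is the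
digit string of the largest number with `N` digits. Digits of `l'` may exceed their radix, and
an excess in the lowest digit must be a multiple `c (l 0 + 1)` carried on as `c` to the next
position. Peeling off the lowest digit therefore shows by induction that a digit string `a`
whose value falls short of that of `l` by `m` has `∑ l ≤ ∑ a + m`. A carry `c` costs `c · l 0`
of digit sum, so when the values agree and `∑ a ≤ ∑ l` the positivity of `l 0` forbids any
carry, and the digits agree one by one.
-/

open Finset

theorem Fin.prod_Iio_succ {M : Type*} [CommMonoid M] {n : ℕ} (f : Fin (n + 1) → M)
    (i : Fin n) : ∏ j ∈ Iio i.succ, f j = f 0 * ∏ j ∈ Iio i, f j.succ := by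
  have hIio : Iio i.succ = Finset.cons 0 ((Iio i).map (succEmb n)) (by simp) := by
    ext j
    cases j using Fin.cases <;> simp
  rw [hIio, Finset.prod_cons, prod_map]
  rfl

/-- The value of the digit string `a` in the mixed radix system whose `j`-th radix is `b j + 1`:
digit `i` has weight `Q i = ∏ j < i, (b j + 1)`. -/
def mixedRadixValue {n : ℕ} (b a : Fin n → ℕ) : ℕ :=
  ∑ i, a i * ∏ j ∈ Iio i, (b j + 1)

theorem mixedRadixValue_succ {n : ℕ} (b a : Fin (n + 1) → ℕ) :
    mixedRadixValue b a
      = a 0 + (b 0 + 1) * mixedRadixValue (fun i => b i.succ) (fun i => a i.succ) := by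
  simp only [mixedRadixValue, Fin.sum_univ_succ, Fin.prod_Iio_succ, mul_sum]
  simp [← bot_eq_zero, mul_left_comm]

theorem exists_carry_of_add_mul_eq {r x y s t : ℕ} (hy : y < r)
    (h : x + r * s = y + r * t) : ∃ c, t = s + c ∧ x = y + r * c := by
  have hst : s ≤ t := by
    by_contra! hts
    have : r * (t + 1) ≤ r * s := Nat.mul_le_mul_left r hts
    rw [mul_add_one] at this
    omega
  obtain ⟨c, rfl⟩ := Nat.exists_eq_add_of_le hst
  exact ⟨c, rfl, by rw [mul_add] at h; omega⟩

theorem sum_le_sum_add_of_mixedRadixValue_add_eq {n : ℕ} {b a : Fin n → ℕ} {m : ℕ}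
    (h : mixedRadixValue b a + m = mixedRadixValue b b) : ∑ i, b i ≤ ∑ i, a i + m := by
  induction n generalizing m with
  | zero => simp
  | succ n ih =>
    rw [mixedRadixValue_succ, mixedRadixValue_succ b b, add_right_comm] at h
    obtain ⟨c, htail, hhead⟩ := exists_carry_of_add_mul_eq (Nat.lt_add_one (b 0)) h
    have htail_sum := ih htail.symm
    have hc : c ≤ (b 0 + 1) * c := Nat.le_mul_of_pos_left c (Nat.succ_pos _)
    rw [Fin.sum_univ_succ, Fin.sum_univ_succ]
    omega

theorem eq_of_mixedRadixValue_eq_of_sum_le {n : ℕ} {b a : Fin n → ℕ} (hb : ∀ i, 0 < b i)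
    (h : mixedRadixValue b a = mixedRadixValue b b) (hsum : ∑ i, a i ≤ ∑ i, b i) : a = b := by
  induction n with
  | zero => exact Subsingleton.elim a b
  | succ n ih =>
    rw [mixedRadixValue_succ, mixedRadixValue_succ b b] at h
    obtain ⟨c, htail, hhead⟩ := exists_carry_of_add_mul_eq (Nat.lt_add_one (b 0)) h
    have htail_sum := sum_le_sum_add_of_mixedRadixValue_add_eq htail.symm
    rw [Fin.sum_univ_succ, Fin.sum_univ_succ] at hsum
    have hcarry : (b 0 + 1) * c ≤ c := by omega
    obtain rfl : c = 0 := by nlinarith [hb 0]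
    have htail_eq := ih (fun i => hb i.succ) htail.symm (by omega)
    ext i
    cases i using Fin.cases with
    | zero => simpa using hhead
    | succ i => exact congrFun htail_eq i

/-- Theorem 1 of the paper: uniqueness of the target frequency for the
mixed-radix weights `Q i = ∏_{j<i} (l j + 1)` (with `Q 0 = 1`). -/
theorem mixed_radix_unique (N : ℕ) (l l' : Fin N → ℕ)
    (h1 : ∀ i, 0 < l i)
    (h2 : ∑ i, l' i ≤ ∑ i, l i)
    (h3 : ∑ i, l i * ∏ j ∈ Finset.Iio i, (l j + 1)
        = ∑ i, l' i * ∏ j ∈ Finset.Iio i, (l j + 1)) :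
    ∀ i, l i = l' i :=
  fun i => (congrFun (eq_of_mixedRadixValue_eq_of_sum_le h1 h3.symm h2) i).symm
end

section
/- Let N be a natural number and let l_1, ..., l_N, l'_1, ..., l'_N be integers satisfying: (1) l_i > 0 and l'_i ≥ 0 for all i; (2) ∑_{i=1}^N l_i ≥ ∑_{i=1}^N l'_i; and (3) ∑_{i=1}^N l_i Q_i = ∑_{i=1}^N l'_i Q_i, where Q_1 = 1 and Q_i = ∏_{j=1}^{i-1} (l_j + 1) for i ≥ 2. Then there exist nonnegative integers k_0, k_1, ..., k_N with k_0 = 0 and k_N = 0 such that for every m with 1 ≤ m ≤ N one has l'_m + k_{m-1} = l_m + k_m (l_m + 1). -/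
/-!
Read digits `d` in the mixed radices `b` and split the value at position `m`: the value of the
digits below `m` plus `Q_m` times the value `T_m(d)` of the digits from `m` on. The carries are
`k_m = T_m(l) - T_m(l')`. The tail values satisfy `T_m = d_m + b_m T_{m+1}`, which is the required
identity, and the subtraction is not truncated: the digits `l_i < l_i + 1` give a lower part
`< Q_m`, so equal total values force `T_m(l') ≤ T_m(l)`.
-/

open Finset

namespace MixedRadix

variable (b d : ℕ → ℕ)

def value (n : ℕ) : ℕ := ∑ i ∈ range n, d i * ∏ j ∈ range i, b j

def tailValue (m n : ℕ) : ℕ := ∑ i ∈ Ico m n, d i * ∏ j ∈ Ico m i, b j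

variable {b d}

@[simp] lemma tailValue_self (n : ℕ) : tailValue b d n n = 0 := by
  simp [tailValue]

lemma tailValue_zero (n : ℕ) : tailValue b d 0 n = value b d n := by
  simp only [tailValue, value, range_eq_Ico]

lemma value_add_mul_tailValue {m n : ℕ} (hmn : m ≤ n) :
    value b d m + (∏ j ∈ range m, b j) * tailValue b d m n = value b d n := by
  rw [value, value, tailValue, ← sum_range_add_sum_Ico _ hmn, mul_sum]
  congr 1
  refine sum_congr rfl fun i hi => ?_
  rw [← prod_range_mul_prod_Ico _ (mem_Ico.1 hi).1]
  ring

lemma tailValue_eq_add_mul {m n : ℕ} (hmn : m < n) :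
    tailValue b d m n = d m + b m * tailValue b d (m + 1) n := by
  rw [tailValue, tailValue, sum_eq_sum_Ico_succ_bot hmn, Ico_self, prod_empty, mul_one, mul_sum]
  congr 1
  refine sum_congr rfl fun i hi => ?_
  rw [prod_eq_prod_Ico_succ_bot (by have := (mem_Ico.1 hi).1; omega)]
  ring

lemma value_lt_prod {m : ℕ} (hd : ∀ i < m, d i < b i) :
    value b d m < ∏ j ∈ range m, b j := by
  induction m with
  | zero => simp [value]
  | succ m ih =>
    have hlt := ih fun i hi => hd i (by omega)
    calc value b d (m + 1) + 1 = value b d m + 1 + d m * ∏ j ∈ range m, b j := by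
          rw [value, sum_range_succ, ← value]; ring
      _ ≤ (d m + 1) * ∏ j ∈ range m, b j := by nlinarith
      _ ≤ ∏ j ∈ range (m + 1), b j := by
          rw [prod_range_succ, mul_comm]
          exact Nat.mul_le_mul_left _ (hd m (by omega))

lemma tailValue_le_of_value_eq {a c : ℕ → ℕ} {m n : ℕ} (ha : ∀ i < n, a i < b i)
    (hac : value b a n = value b c n) (hmn : m ≤ n) :
    tailValue b c m n ≤ tailValue b a m n := by
  by_contra! hlt
  have hA := value_lt_prod (m := m) fun i hi => ha i (by omega)
  have key := value_add_mul_tailValue (b := b) (d := a) hmn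
  rw [hac, ← value_add_mul_tailValue (b := b) (d := c) hmn] at key
  nlinarith [Nat.mul_le_mul_left (∏ j ∈ range m, b j) hlt]

theorem exists_carries {a c : ℕ → ℕ} {n : ℕ} (ha : ∀ i < n, a i < b i)
    (hac : value b a n = value b c n) :
    ∃ k : ℕ → ℕ, k 0 = 0 ∧ k n = 0 ∧ ∀ m < n, c m + k m = a m + k (m + 1) * b m := by
  refine ⟨fun m => tailValue b a m n - tailValue b c m n, ?_, by simp, fun m hm => ?_⟩
  · simp only [tailValue_zero, hac, Nat.sub_self]
  · obtain ⟨x, hx⟩ := Nat.exists_eq_add_of_le (tailValue_le_of_value_eq ha hac (m := m + 1) hm)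
    have hle := tailValue_le_of_value_eq ha hac hm.le
    simp only [tailValue_eq_add_mul hm, hx, Nat.add_sub_cancel_left] at hle ⊢
    rw [mul_add] at hle ⊢
    rw [mul_comm x]
    omega

lemma sum_fin_eq_value (N : ℕ) :
    ∑ i : Fin N, d i * ∏ j ∈ Iio i, b j = value b d N := by
  rw [value, ← Fin.sum_univ_eq_sum_range]
  refine sum_congr rfl fun i _ => ?_
  rw [← Nat.Iio_eq_range, ← Fin.map_valEmbedding_Iio, prod_map]
  rfl

end MixedRadix

theorem mixed_radix_carries_general (N : ℕ) (l l' : Fin N → ℕ)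
    (h3 : ∑ i, l i * ∏ j ∈ Finset.Iio i, (l j + 1)
        = ∑ i, l' i * ∏ j ∈ Finset.Iio i, (l j + 1)) :
    ∃ k : Fin (N + 1) → ℕ, k 0 = 0 ∧ k (Fin.last N) = 0 ∧
      ∀ m : Fin N, l' m + k m.castSucc = l m + k m.succ * (l m + 1) := by
  set L : ℕ → ℕ := fun i => if h : i < N then l ⟨i, h⟩ else 0
  set L' : ℕ → ℕ := fun i => if h : i < N then l' ⟨i, h⟩ else 0
  have hL : ∀ i : Fin N, l i = L i := fun i => by simp [L]
  have hL' : ∀ i : Fin N, l' i = L' i := fun i => by simp [L']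
  simp only [hL, hL'] at h3 ⊢
  rw [MixedRadix.sum_fin_eq_value (b := fun j => L j + 1),
    MixedRadix.sum_fin_eq_value (b := fun j => L j + 1)] at h3
  obtain ⟨k, hk0, hkN, hk⟩ := MixedRadix.exists_carries (fun i _ => Nat.lt_succ_self (L i)) h3
  exact ⟨fun m => k m, hk0, hkN, fun m => hk m m.isLt⟩

/-- Lemma 1 from the appendix of the paper: existence of carries
`k_0, ..., k_N` with `k_0 = k_N = 0` such that
`l'_m + k_{m-1} = l_m + k_m * (l_m + 1)` for all `m`. -/
theorem mixed_radix_carries (N : ℕ) (l l' : Fin N → ℕ)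
    (h1 : ∀ i, 0 < l i)
    (h2 : ∑ i, l' i ≤ ∑ i, l i)
    (h3 : ∑ i, l i * ∏ j ∈ Finset.Iio i, (l j + 1)
        = ∑ i, l' i * ∏ j ∈ Finset.Iio i, (l j + 1)) :
    ∃ k : Fin (N + 1) → ℕ, k 0 = 0 ∧ k (Fin.last N) = 0 ∧
      ∀ m : Fin N, l' m + k m.castSucc = l m + k m.succ * (l m + 1) :=
  mixed_radix_carries_general N l l' h3
end

section
/- Let N be a natural number and let l_1, ..., l_N be nonnegative integers (some possibly zero). Define Q_i = ∏_{j=1}^{i-1} (l_j + 1) if l_i > 0 and Q_i = 0 if l_i = 0 (with the empty product equal to 1, so Q_1 = 1 when l_1 > 0). Let l'_1, ..., l'_N be nonnegative integers with ∑_{i=1}^N l'_i = ∑_{i=1}^N l_i. If ∑_{i=1}^N l'_i Q_i = ∑_{i=1}^N l_i Q_i, then l'_i = l_i for all i. -/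
/-!
The nonzero `Q i` are the place values of the mixed-radix system with digits `l i` (positions with
`l i = 0` get no weight), so `∑ l i * Q i + 1 = ∏ (l i + 1)` telescopes. Strengthen the claim to:
if `∑ a i * Q i + 1 = (t + 1) * ∏ (l i + 1)` and `∑ a i ≤ ∑ l i + t`, then `t = 0` and `a = l`.
Induct on the last position: if `l last > 0`, then `a last < (t + 1) * (l last + 1)`, and the
remaining `(t + 1) * (l last + 1) - a last` copies of `∏_{j < last} (l j + 1)` are represented by the
lower positions with some multiplier `s + 1`; the budget `∑ a i ≤ ∑ l i + t` then forces
`s = t = 0`.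
-/

open Finset

def frequency {n : ℕ} (l : Fin n → ℕ) (i : Fin n) : ℕ :=
  if l i = 0 then 0 else ∏ j ∈ Iio i, (l j + 1)

theorem frequency_castSucc {n : ℕ} (l : Fin (n + 1) → ℕ) (i : Fin n) :
    frequency l i.castSucc = frequency (fun j ↦ l j.castSucc) i := by
  simp only [frequency, Fin.prod_Iio_castSucc]

theorem frequency_last {n : ℕ} (l : Fin (n + 1) → ℕ) :
    frequency l (Fin.last n) =
      if l (Fin.last n) = 0 then 0 else ∏ i : Fin n, (l i.castSucc + 1) := by
  simp only [frequency, Fin.Iio_last_eq_map, prod_map, Fin.coe_castSuccEmb]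

theorem mul_frequency {n : ℕ} (l : Fin n → ℕ) (i : Fin n) :
    l i * frequency l i = l i * ∏ j ∈ Iio i, (l j + 1) := by
  unfold frequency
  split_ifs with h <;> simp [h]

theorem sum_mul_frequency_add_one {n : ℕ} (l : Fin n → ℕ) :
    ∑ i, l i * frequency l i + 1 = ∏ i, (l i + 1) := by
  induction n with
  | zero => simp
  | succ n ih =>
    rw [Fin.sum_univ_castSucc, Fin.prod_univ_castSucc, mul_frequency, Fin.Iio_last_eq_map,
      prod_map]
    simp only [frequency_castSucc, Fin.coe_castSuccEmb]
    rw [add_right_comm, ih]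
    ring

theorem eq_of_sum_mul_frequency_add_one_eq {n : ℕ} (l a : Fin n → ℕ) (t : ℕ)
    (hval : ∑ i, a i * frequency l i + 1 = (t + 1) * ∏ i, (l i + 1))
    (hsum : ∑ i, a i ≤ ∑ i, l i + t) :
    t = 0 ∧ ∀ i, a i = l i := by
  induction n generalizing t with
  | zero => simp_all
  | succ n ih =>
    rw [Fin.sum_univ_castSucc, Fin.prod_univ_castSucc, frequency_last] at hval
    rw [Fin.sum_univ_castSucc, Fin.sum_univ_castSucc] at hsum
    simp only [frequency_castSucc] at hval
    set S := ∑ i : Fin n, a i.castSucc * frequency (fun j ↦ l j.castSucc) i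
    set P := ∏ i : Fin n, (l i.castSucc + 1)
    suffices t = 0 ∧ (∀ i : Fin n, a i.castSucc = l i.castSucc) ∧
        a (Fin.last n) = l (Fin.last n) by
      obtain ⟨ht, hinit, hlast⟩ := this
      exact ⟨ht, Fin.lastCases hlast hinit⟩
    by_cases hl : l (Fin.last n) = 0
    · rw [if_pos hl, hl, mul_zero, add_zero, zero_add, mul_one] at hval
      obtain ⟨ht, hinit⟩ := ih (fun i ↦ l i.castSucc) (fun i ↦ a i.castSucc) t hval (by omega)
      have hsum_init := sum_congr rfl fun i (_ : i ∈ univ) ↦ hinit i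
      exact ⟨ht, hinit, by omega⟩
    · rw [if_neg hl] at hval
      have hP : 0 < P := prod_pos fun i _ ↦ Nat.succ_pos _
      have hlt : a (Fin.last n) < (t + 1) * (l (Fin.last n) + 1) := by
        refine Nat.lt_of_mul_lt_mul_right (a := P) ?_
        nlinarith
      obtain ⟨s, hs⟩ : ∃ s, a (Fin.last n) + s + 1 = (t + 1) * (l (Fin.last n) + 1) :=
        ⟨(t + 1) * (l (Fin.last n) + 1) - a (Fin.last n) - 1, by omega⟩
      have hval' : S + 1 = (s + 1) * P := by
        have : (t + 1) * (P * (l (Fin.last n) + 1)) = (a (Fin.last n) + s + 1) * P := by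
          rw [hs]; ring
        linarith
      obtain ⟨rfl, hinit⟩ :=
        ih (fun i ↦ l i.castSucc) (fun i ↦ a i.castSucc) s hval' (by nlinarith)
      have hsum_init := sum_congr rfl fun i (_ : i ∈ univ) ↦ hinit i
      have ht : t = 0 := by nlinarith [Nat.pos_of_ne_zero hl]
      subst ht
      exact ⟨rfl, hinit, by omega⟩

/-- Correctness of the second method of choosing the frequencies
(equation (5) of the paper), allowing empty output channels:
`Q i = ∏_{j<i} (l j + 1)` if `l i > 0`, and `Q i = 0` if `l i = 0`. -/
theorem second_method_unique (N : ℕ) (l l' : Fin N → ℕ)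
    (hsum : ∑ i, l' i = ∑ i, l i)
    (hfreq : ∑ i, l' i * (if l i = 0 then 0 else ∏ j ∈ Finset.Iio i, (l j + 1))
           = ∑ i, l i * (if l i = 0 then 0 else ∏ j ∈ Finset.Iio i, (l j + 1))) :
    ∀ i, l' i = l i := by
  have hval : ∑ i, l' i * frequency l i + 1 = (0 + 1) * ∏ i, (l i + 1) := by
    rw [zero_add, one_mul, ← sum_mul_frequency_add_one]
    exact congrArg (· + 1) hfreq
  exact (eq_of_sum_mul_frequency_add_one_eq l l' 0 hval hsum.le).2
end

section
/- Let N be a natural number and let l_1, ..., l_N be nonnegative integers (some possibly zero). Define Q_i = ∏_{j=1}^{i-1} (l_j + 1) if l_i > 0 and Q_i = 0 if l_i = 0 (with the empty product equal to 1, so Q_1 = 1 when l_1 > 0), and set f = ∑_{i=1}^N l_i Q_i. Let l'_1, ..., l'_N be nonnegative integers with ∑_{i=1}^N l'_i = ∑_{i=1}^N l_i. If ∑_{i=1}^N l'_i Q_i ≡ f (mod f + 1), then l'_i = l_i for all i. -/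
/-!
Write `P_i = ∏_{j<i} (l_j + 1)`. Since `l_i P_i = P_{i+1} - P_i`, the target frequency is
`f = P_N - 1`, the number whose mixed-radix digits (radices `l_j + 1`) are exactly `l`.
The frequency of `l'` is `l'` read as digits at the non-empty positions, and it must be
`≡ -1 (mod P_N)`. Normalising it to the digits `l` needs only carries, and each carry strictly
lowers the digit sum; as `∑ l' = ∑ l` no carry occurs, so `l' ≤ l` digitwise and hence `l' = l`.
-/

open Finset

namespace MixedRadix

variable {n : ℕ}

def placeValue (l : Fin n → ℕ) (i : Fin n) : ℕ :=
  ∏ j ∈ Iio i, (l j + 1)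

def channelFreq (l : Fin n → ℕ) (i : Fin n) : ℕ :=
  if l i = 0 then 0 else placeValue l i

theorem channelFreq_zero_of_pos (l : Fin (n + 1) → ℕ) (h : 0 < l 0) : channelFreq l 0 = 1 := by
  simp [channelFreq, placeValue, h.ne']

theorem channelFreq_zero_of_eq_zero (l : Fin (n + 1) → ℕ) (h : l 0 = 0) : channelFreq l 0 = 0 := by
  simp [channelFreq, h]

theorem channelFreq_succ (l : Fin (n + 1) → ℕ) (i : Fin n) :
    channelFreq l i.succ = (l 0 + 1) * channelFreq (fun i => l i.succ) i := by
  simp only [channelFreq, placeValue, Fin.prod_Iio_succ]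
  split_ifs <;> simp

theorem sum_mul_channelFreq_succ (l a : Fin (n + 1) → ℕ) :
    ∑ i, a i * channelFreq l i =
      a 0 * channelFreq l 0 + (l 0 + 1) * ∑ i, a i.succ * channelFreq (fun i => l i.succ) i := by
  simp only [Fin.sum_univ_succ, channelFreq_succ, mul_sum]
  congr 1
  exact sum_congr rfl fun i _ => by ring

theorem sum_mul_channelFreq_add_one (l : Fin n → ℕ) :
    ∑ i, l i * channelFreq l i + 1 = ∏ i, (l i + 1) := by
  induction n with
  | zero => simp
  | succ n ih =>
    rw [sum_mul_channelFreq_succ, Fin.prod_univ_succ, ← ih (fun i => l i.succ)]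
    have hfirst : l 0 * channelFreq l 0 = l 0 := by
      rcases (l 0).eq_zero_or_pos with h | h
      · simp [h]
      · simp [channelFreq_zero_of_pos l h]
    rw [hfirst]
    ring

/-- `m` is a carry into the lowest digit, counted with the digit sum of `a`. -/
theorem sum_le_and_le_of_dvd (l a : Fin n → ℕ) (m : ℕ)
    (h : ∏ i, (l i + 1) ∣ m + ∑ i, a i * channelFreq l i + 1) :
    ∑ i, l i ≤ m + ∑ i, a i ∧ (m + ∑ i, a i = ∑ i, l i → a ≤ l) := by
  induction n generalizing m with
  | zero => simp
  | succ n ih =>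
    rw [sum_mul_channelFreq_succ, Fin.prod_univ_succ] at h
    simp only [Fin.sum_univ_succ, Pi.le_def, Fin.forall_fin_succ]
    set W := ∑ i, a i.succ * channelFreq (fun i => l i.succ) i
    rcases (l 0).eq_zero_or_pos with h0 | h0
    · rw [channelFreq_zero_of_eq_zero l h0, h0] at h
      obtain ⟨hle, heq⟩ := ih (fun i => l i.succ) (fun i => a i.succ) m (by simpa using h)
      simp only [Pi.le_def] at heq
      refine ⟨by omega, fun hsum => ⟨by omega, heq (by omega)⟩⟩
    · rw [channelFreq_zero_of_pos l h0] at h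
      rw [show m + (a 0 * 1 + (l 0 + 1) * W) + 1 = m + a 0 + 1 + (l 0 + 1) * W by ring] at h
      obtain ⟨c, hc⟩ := (Nat.dvd_add_left (dvd_mul_right _ _)).1 ((dvd_mul_right _ _).trans h)
      obtain ⟨k, rfl⟩ : ∃ k, c = k + 1 := Nat.exists_eq_add_one.2 (Nat.pos_of_ne_zero (by
        rintro rfl; simp at hc))
      have htail : ∏ i : Fin n, (l i.succ + 1) ∣ k + W + 1 := by
        rw [hc, ← mul_add, add_right_comm] at h
        exact Nat.dvd_of_mul_dvd_mul_left (l 0).succ_pos h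
      obtain ⟨hle, heq⟩ := ih (fun i => l i.succ) (fun i => a i.succ) k htail
      simp only [Pi.le_def] at heq
      have hcarry : m + a 0 = l 0 + (l 0 + 1) * k := by linarith
      -- carrying `k` into the next digit costs `l 0 * k ≥ k` of digit sum
      have hk : 2 * k ≤ (l 0 + 1) * k := Nat.mul_le_mul_right k (by omega)
      refine ⟨by omega, fun hsum => ?_⟩
      obtain rfl : k = 0 := by omega
      exact ⟨by omega, heq (by omega)⟩

end MixedRadix

open MixedRadix

/-- Correctness of the sampling frequency `f_s = f + 1` combined with the
second method of choosing the frequencies (equation (5) of the paper),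
allowing empty output channels: no other output state with the same total
photon number has a frequency congruent to the target frequency `f`
modulo `f + 1`. -/
theorem second_method_unique_mod (N : ℕ) (l l' : Fin N → ℕ)
    (hsum : ∑ i, l' i = ∑ i, l i)
    (hfreq : ∑ i, l' i * (if l i = 0 then 0 else ∏ j ∈ Finset.Iio i, (l j + 1))
           ≡ ∑ i, l i * (if l i = 0 then 0 else ∏ j ∈ Finset.Iio i, (l j + 1))
           [MOD (∑ i, l i * (if l i = 0 then 0 else ∏ j ∈ Finset.Iio i, (l j + 1))) + 1]) :
    ∀ i, l' i = l i := by
  change ∑ i, l' i * channelFreq l i ≡ ∑ i, l i * channelFreq l i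
    [MOD ∑ i, l i * channelFreq l i + 1] at hfreq
  have hdvd : ∏ i, (l i + 1) ∣ 0 + ∑ i, l' i * channelFreq l i + 1 := by
    rw [← sum_mul_channelFreq_add_one, zero_add, ← Nat.modEq_zero_iff_dvd]
    exact (hfreq.add_right 1).trans (Nat.modEq_zero_iff_dvd.2 dvd_rfl)
  have hle : l' ≤ l := (sum_le_and_le_of_dvd l l' 0 hdvd).2 (by rw [zero_add, hsum])
  intro i
  exact (sum_eq_sum_iff_of_le fun j _ => hle j).1 hsum i (mem_univ i)
end
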